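/- For every Δt₀ ∈ (0,1), there exists a constant C(Δt₀) ∈ (0,∞) such that for all Δt ∈ (0, Δt₀] and all z₁, z₂ ∈ ℝ, |Ψ_{Δt}(z₂) − Ψ_{Δt}(z₁)| ≤ C(Δt₀)|z₂ − z₁|(1 + |z₁|³ + |z₂|³). -/

import Mathlib

/-- The time-`t` flow map of the ODE `ż = z - z³`:
`Φ_t(z) = z / √(e^{-2t} + (1 - e^{-2t}) z²)`. -/
noncomputable def Phi (t z : ℝ) : ℝ :=
  z / Real.sqrt (Real.exp (-2 * t) + (1 - Real.exp (-2 * t)) * z ^ 2)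

/-- `Ψ_{Δt}(z) = (Φ_{Δt}(z) - z) / Δt`. -/
noncomputable def Psi (Δt z : ℝ) : ℝ := (Phi Δt z - z) / Δt

lemma phi_hasDerivAt (t z : ℝ) (ht : 0 ≤ t) :
    HasDerivAt (fun z => Phi t z)
      (Real.exp (-2 * t) /
        Real.sqrt (Real.exp (-2 * t) + (1 - Real.exp (-2 * t)) * z ^ 2) ^ 3) z := by
  set a := Real.exp (-2 * t) with ha
  have ha0 : 0 < a := Real.exp_pos _
  have ha1 : a ≤ 1 := Real.exp_le_one_iff.mpr (by linarith)
  have hu0 : 0 < a + (1 - a) * z ^ 2 := by nlinarith [sq_nonneg z]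
  set S := Real.sqrt (a + (1 - a) * z ^ 2) with hS
  have hS0 : 0 < S := Real.sqrt_pos.mpr hu0
  have hS2 : S ^ 2 = a + (1 - a) * z ^ 2 := Real.sq_sqrt hu0.le
  have hu' : HasDerivAt (fun z : ℝ => a + (1 - a) * z ^ 2) ((1 - a) * (2 * z)) z := by
    simpa using ((hasDerivAt_pow 2 z).const_mul (1 - a)).const_add a
  have hsq : HasDerivAt (fun z : ℝ => Real.sqrt (a + (1 - a) * z ^ 2))
      (1 / (2 * S) * ((1 - a) * (2 * z))) z :=
    (Real.hasDerivAt_sqrt hu0.ne').comp z hu'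
  have hdiv := (hasDerivAt_id z).div hsq hS0.ne'
  refine hdiv.congr_deriv ?_
  rw [← hS]
  simp only [id]
  field_simp
  linear_combination hS2

lemma psi_deriv_bound (Δt z : ℝ) (h0 : 0 < Δt) (h1 : Δt ≤ 1) :
    |(Real.exp (-2 * Δt) /
        Real.sqrt (Real.exp (-2 * Δt) + (1 - Real.exp (-2 * Δt)) * z ^ 2) ^ 3 - 1) / Δt|
      ≤ 4 * Real.exp 3 * (1 + z ^ 2) := by
  set a := Real.exp (-2 * Δt) with ha
  have ha0 : 0 < a := Real.exp_pos _
  have ha1 : a ≤ 1 := Real.exp_le_one_iff.mpr (by linarith)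
  -- a ≥ e^{-2}
  have hae : Real.exp (-2) ≤ a := Real.exp_le_exp.mpr (by linarith)
  -- b = 1 - a ≤ 2Δt
  have hb2 : 1 - a ≤ 2 * Δt := by
    have := Real.add_one_le_exp (-2 * Δt)
    linarith
  have hb0 : 0 ≤ 1 - a := by linarith
  have hu0 : 0 < a + (1 - a) * z ^ 2 := by nlinarith [sq_nonneg z]
  set S := Real.sqrt (a + (1 - a) * z ^ 2) with hS
  have hS0 : 0 < S := Real.sqrt_pos.mpr hu0
  have hS2 : S ^ 2 = a + (1 - a) * z ^ 2 := Real.sq_sqrt hu0.le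
  -- S ≥ e^{-1}
  have hSe : Real.exp (-1) ≤ S := by
    rw [hS]
    apply Real.le_sqrt' (Real.exp_pos _) |>.mpr ?_
    have : Real.exp (-1) ^ 2 = Real.exp (-2) := by
      rw [← Real.exp_nat_mul]; norm_num
    rw [this]
    nlinarith [sq_nonneg z]
  clear_value a S
  -- key identity
  have hkey : a - S ^ 3 = (1 - a) * (a * (1 - z ^ 2) / (1 + S) - z ^ 2 * S) := by
    have h1S : (0:ℝ) < 1 + S := by linarith
    have h1m : (1:ℝ) - S = (1-a)*(1-z^2)/(1+S) := by
      rw [eq_div_iff h1S.ne']; linear_combination -hS2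
    calc a - S^3 = a*(1-S) - (1-a)*z^2*S := by linear_combination (-S)*hS2
      _ = a*((1-a)*(1-z^2)/(1+S)) - (1-a)*z^2*S := by rw [h1m]
      _ = (1-a)*(a*(1-z^2)/(1+S) - z^2*S) := by ring
  -- bound on |a - S^3|
  have habs : |a - S ^ 3| ≤ (1 - a) * (1 + z ^ 2) + (1 - a) * z ^ 2 * S := by
    rw [hkey]
    have h1S : (1:ℝ) ≤ 1 + S := by linarith
    have hfrac : |a * (1 - z ^ 2) / (1 + S)| ≤ 1 + z ^ 2 := by
      rw [abs_div, abs_of_pos (by linarith : (0:ℝ) < 1 + S)]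
      rw [div_le_iff₀ (by linarith)]
      have : |a * (1 - z ^ 2)| ≤ 1 + z ^ 2 := by
        rw [abs_mul, abs_of_pos ha0]
        calc a * |1 - z ^ 2| ≤ 1 * |1 - z^2| := by
              apply mul_le_mul_of_nonneg_right ha1 (abs_nonneg _)
          _ ≤ 1 + z^2 := by rw [one_mul]; cases abs_cases (1 - z^2) <;> nlinarith
      nlinarith [abs_nonneg (a * (1 - z^2)), sq_nonneg z, hS0]
    calc |(1 - a) * (a * (1 - z ^ 2) / (1 + S) - z ^ 2 * S)|
        ≤ (1 - a) * (|a * (1 - z ^ 2) / (1 + S)| + |z ^ 2 * S|) := by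
          rw [abs_mul, abs_of_nonneg hb0]
          exact mul_le_mul_of_nonneg_left (abs_sub _ _) hb0
      _ ≤ (1 - a) * ((1 + z ^ 2) + z ^ 2 * S) := by
          apply mul_le_mul_of_nonneg_left _ hb0
          have : |z ^ 2 * S| = z ^ 2 * S := abs_of_nonneg (by positivity)
          linarith [hfrac, this.le]
      _ = (1 - a) * (1 + z ^ 2) + (1 - a) * z ^ 2 * S := by ring
  -- auxiliary exponential facts
  have he23 : Real.exp 2 ≤ Real.exp 3 := Real.exp_le_exp.mpr (by norm_num)
  have hS3e : 1 ≤ Real.exp 3 * S ^ 3 := by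
    have h1 : Real.exp (-1) ^ 3 ≤ S ^ 3 :=
      pow_le_pow_left₀ (Real.exp_pos _).le hSe 3
    have h2 : Real.exp 3 * Real.exp (-1) ^ 3 = 1 := by
      rw [← Real.exp_nat_mul, ← Real.exp_add]; norm_num
    nlinarith [Real.exp_pos 3]
  have hS2e : 1 ≤ Real.exp 2 * S ^ 2 := by
    have h1 : Real.exp (-2) ≤ S ^ 2 := by nlinarith [sq_nonneg z]
    have h2 : Real.exp 2 * Real.exp (-2) = 1 := by rw [← Real.exp_add]; norm_num
    nlinarith [Real.exp_pos 2]
  have hS3 : (0:ℝ) < S ^ 3 := by positivity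
  have hrw : (a / S ^ 3 - 1) / Δt = (a - S ^ 3) / (S ^ 3 * Δt) := by
    field_simp
  rw [hrw, abs_div, abs_of_pos (mul_pos hS3 h0), div_le_iff₀ (mul_pos hS3 h0)]
  have t1 : (1 - a) * (1 + z ^ 2) ≤ 2 * Δt * (1 + z ^ 2) * (Real.exp 3 * S ^ 3) := by
    calc (1 - a) * (1 + z ^ 2) ≤ 2 * Δt * (1 + z ^ 2) := by
          have := mul_le_mul_of_nonneg_right hb2 (by positivity : (0:ℝ) ≤ 1 + z ^ 2)
          linarith
      _ = 2 * Δt * (1 + z ^ 2) * 1 := by ring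
      _ ≤ 2 * Δt * (1 + z ^ 2) * (Real.exp 3 * S ^ 3) := by
          apply mul_le_mul_of_nonneg_left hS3e (by positivity)
  have t2 : (1 - a) * z ^ 2 * S ≤ 2 * Δt * (1 + z ^ 2) * (Real.exp 3 * S ^ 3) := by
    have s1 : (1 - a) * z ^ 2 * S ≤ 2 * Δt * z ^ 2 * S := by
      have := mul_le_mul_of_nonneg_right hb2 (mul_nonneg (sq_nonneg z) hS0.le)
      linarith [this]
    have s3 : 2 * Δt * z ^ 2 * S * 1 ≤ 2 * Δt * z ^ 2 * S * (Real.exp 2 * S ^ 2) :=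
      mul_le_mul_of_nonneg_left hS2e (by positivity)
    have s5 : 2 * Δt * S ^ 3 * (Real.exp 2 * z ^ 2)
        ≤ 2 * Δt * S ^ 3 * (Real.exp 3 * (1 + z ^ 2)) := by
      apply mul_le_mul_of_nonneg_left _ (by positivity)
      have hp : 0 ≤ (Real.exp 3 - Real.exp 2) * z ^ 2 :=
        mul_nonneg (by linarith) (sq_nonneg z)
      linarith [Real.exp_pos 3, hp]
    linarith [s1, s3, s5]
  calc |a - S ^ 3| ≤ (1 - a) * (1 + z ^ 2) + (1 - a) * z ^ 2 * S := habs
    _ ≤ 4 * Δt * (1 + z ^ 2) * (Real.exp 3 * S ^ 3) := by linarith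
    _ = 4 * Real.exp 3 * (1 + z ^ 2) * (S ^ 3 * Δt) := by ring

lemma cube_bound (w : ℝ) : w ^ 2 ≤ 1 + |w| ^ 3 := by
  have h : 0 ≤ |w| := abs_nonneg w
  have h2 : w ^ 2 = |w| ^ 2 := (sq_abs w).symm
  rw [h2]
  nlinarith [mul_nonneg h (sq_nonneg (|w| - 1)), sq_nonneg (|w| - 1), sq_nonneg |w|]

/-- For every `Δt₀ ∈ (0,1)`, there exists `C(Δt₀) ∈ (0,∞)` such that for all
`Δt ∈ (0, Δt₀]` and all `z₁ z₂ : ℝ`,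
`|Ψ_{Δt}(z₂) - Ψ_{Δt}(z₁)| ≤ C(Δt₀) |z₂ - z₁| (1 + |z₁|³ + |z₂|³)`. -/
theorem stmt11 (Δt₀ : ℝ) (hΔt₀ : Δt₀ ∈ Set.Ioo (0 : ℝ) 1) :
    ∃ C : ℝ, 0 < C ∧
      ∀ Δt ∈ Set.Ioc (0 : ℝ) Δt₀, ∀ z₁ z₂ : ℝ,
        |Psi Δt z₂ - Psi Δt z₁| ≤ C * |z₂ - z₁| * (1 + |z₁| ^ 3 + |z₂| ^ 3) := by
  obtain ⟨hΔt₀0, hΔt₀1⟩ := hΔt₀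
  refine ⟨12 * Real.exp 3, by positivity, ?_⟩
  rintro Δt ⟨ht0, ht1⟩ z₁ z₂
  have ht1' : Δt ≤ 1 := le_trans ht1 hΔt₀1.le
  set f' : ℝ → ℝ := fun x =>
    (Real.exp (-2 * Δt) /
        Real.sqrt (Real.exp (-2 * Δt) + (1 - Real.exp (-2 * Δt)) * x ^ 2) ^ 3 - 1) / Δt
    with hf'
  have hderiv : ∀ x : ℝ, HasDerivAt (Psi Δt) (f' x) x := by
    intro x
    have := ((phi_hasDerivAt Δt x ht0.le).sub (hasDerivAt_id x)).div_const Δt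
    exact this
  have hseg : ∀ x ∈ segment ℝ z₁ z₂, x ^ 2 ≤ z₁ ^ 2 + z₂ ^ 2 := by
    rintro x ⟨p, q, hp, hq, hpq, rfl⟩
    simp only [smul_eq_mul]
    have hq1 : q = 1 - p := by linarith
    subst hq1
    nlinarith [mul_nonneg (mul_nonneg hp hq) (sq_nonneg (z₁ - z₂)),
      mul_nonneg hq (sq_nonneg z₁), mul_nonneg hp (sq_nonneg z₂)]
  have hbound : ∀ x ∈ segment ℝ z₁ z₂,
      ‖f' x‖ ≤ 4 * Real.exp 3 * (1 + z₁ ^ 2 + z₂ ^ 2) := by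
    intro x hx
    rw [Real.norm_eq_abs]
    calc |f' x| ≤ 4 * Real.exp 3 * (1 + x ^ 2) := psi_deriv_bound Δt x ht0 ht1'
      _ ≤ 4 * Real.exp 3 * (1 + z₁ ^ 2 + z₂ ^ 2) := by
          have := hseg x hx
          nlinarith [Real.exp_pos 3]
  have key := Convex.norm_image_sub_le_of_norm_hasDerivWithin_le
    (f := Psi Δt) (f' := f') (s := segment ℝ z₁ z₂)
    (fun x _ => (hderiv x).hasDerivWithinAt) hbound (convex_segment z₁ z₂)
    (left_mem_segment ℝ z₁ z₂) (right_mem_segment ℝ z₁ z₂)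
  rw [Real.norm_eq_abs, Real.norm_eq_abs] at key
  have hquad : 1 + z₁ ^ 2 + z₂ ^ 2 ≤ 3 * (1 + |z₁| ^ 3 + |z₂| ^ 3) := by
    have h1 := cube_bound z₁
    have h2 := cube_bound z₂
    have h3 : (0:ℝ) ≤ |z₁| ^ 3 := by positivity
    have h4 : (0:ℝ) ≤ |z₂| ^ 3 := by positivity
    linarith
  calc |Psi Δt z₂ - Psi Δt z₁|
      ≤ 4 * Real.exp 3 * (1 + z₁ ^ 2 + z₂ ^ 2) * |z₂ - z₁| := key
    _ ≤ 12 * Real.exp 3 * (1 + |z₁| ^ 3 + |z₂| ^ 3) * |z₂ - z₁| := by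
        apply mul_le_mul_of_nonneg_right _ (abs_nonneg _)
        nlinarith [mul_nonneg (Real.exp_pos 3).le
          (by linarith : (0:ℝ) ≤ 3 * (1 + |z₁| ^ 3 + |z₂| ^ 3) - (1 + z₁ ^ 2 + z₂ ^ 2))]
    _ = 12 * Real.exp 3 * |z₂ - z₁| * (1 + |z₁| ^ 3 + |z₂| ^ 3) := by ring
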